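/- arXiv:2303.01029 — 3 statements merged into one kernel-verified Lean document; each statement's English description precedes it below -/
import Mathlib

section
/- Let H and L be n×n Hermitian complex matrices with L positive definite (smallest eigenvalue λ₀ > 0). Then the Cauchy principal value lim_{R→∞} ∫_{-R}^{R} (1/(1+ik)) e^{-i(H+kL)} dk equals the zero matrix. -/
/-!
Write `g z = (1 + i z)⁻¹ • exp (-i (H + z L))`, which is holomorphic on the closed lower half-plane
(its only pole is `z = i`). For `Im z ≤ 0` the generator `T = -i (H + z L)` satisfies
`re ⟪T x, x⟫ = Im z ⟪L x, x⟫ ≤ λ₀ Im z ‖x‖²`, so `‖exp T‖ ≤ exp (λ₀ Im z)`, while `‖z‖ ≤ ‖1 + i z‖`.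
Cauchy's theorem moves `∫_{-R}^{R} g` onto the other three sides of the rectangle
`[-R, R] × [-R, 0]`: the bottom side contributes at most `2 exp (-λ₀ R)` and each vertical side at
most `1 / (λ₀ R)`.
-/

open Matrix
open scoped ComplexOrder

open MeasureTheory Real
open scoped Matrix.Norms.L2Operator

section Dissipative

variable {E : Type*} [NormedAddCommGroup E] [InnerProductSpace ℂ E] [CompleteSpace E]

open ContinuousLinearMap in
theorem norm_exp_le_of_reApplyInnerSelf_le (T : E →L[ℂ] E) (μ : ℝ)
    (hT : ∀ x, T.reApplyInnerSelf x ≤ μ * ‖x‖ ^ 2) :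
    ‖NormedSpace.exp T‖ ≤ Real.exp μ := by
  let _ : InnerProductSpace ℝ E := InnerProductSpace.rclikeToReal ℂ E
  refine opNorm_le_bound _ (Real.exp_pos μ).le fun x => ?_
  set u : ℝ → E := fun s => NormedSpace.exp ((s : ℂ) • T) x
  have hu (s : ℝ) : HasDerivAt u (T (u s)) s :=
    ((apply ℂ E x).hasFDerivAt.comp_hasDerivAt _
      (hasDerivAt_exp_smul_const' T (s : ℂ))).scomp s Complex.ofRealCLM.hasDerivAt |>.congr_deriv
      (one_smul _ _)
  -- `exp (-2μs) ‖u s‖²` is antitone since `d/ds ‖u s‖² = 2 re ⟪T u, u⟫ ≤ 2μ ‖u s‖²`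
  set F : ℝ → ℝ := fun s => Real.exp (-(2 * μ * s)) * ‖u s‖ ^ 2
  have hF (s : ℝ) : HasDerivAt F (Real.exp (-(2 * μ * s)) *
      (2 * T.reApplyInnerSelf (u s) - 2 * μ * ‖u s‖ ^ 2)) s := by
    refine (((hasDerivAt_id s).const_mul (2 * μ)).neg.exp.mul (hu s).norm_sq).congr_deriv ?_
    rw [reApplyInnerSelf_apply, ← inner_re_symm, real_inner_eq_re_inner]
    simp only [Pi.neg_apply, id, mul_one]
    ring
  have hanti : Antitone F := antitone_of_hasDerivAt_nonpos hF fun s =>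
    mul_nonpos_of_nonneg_of_nonpos (Real.exp_pos _).le (by linarith [hT (u s)])
  have h01 : Real.exp (-(2 * μ)) * ‖NormedSpace.exp T x‖ ^ 2 ≤ ‖x‖ ^ 2 := by
    simpa [F, u] using hanti zero_le_one
  have : ‖NormedSpace.exp T x‖ ^ 2 ≤ (Real.exp μ * ‖x‖) ^ 2 := by
    rwa [Real.exp_neg, inv_mul_le_iff₀ (Real.exp_pos _), two_mul, Real.exp_add, ← sq,
      ← mul_pow] at h01
  exact (pow_le_pow_iff_left₀ (norm_nonneg _) (by positivity) two_ne_zero).1 this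

open ContinuousLinearMap Complex in
theorem norm_exp_neg_I_smul_add_smul_le {A B : E →L[ℂ] E}
    (hA : (A : E →ₗ[ℂ] E).IsSymmetric) (hB : (B : E →ₗ[ℂ] E).IsSymmetric) {c : ℝ}
    (hBc : ∀ x, c * ‖x‖ ^ 2 ≤ B.reApplyInnerSelf x) {z : ℂ} (hz : z.im ≤ 0) :
    ‖NormedSpace.exp (-(I • (A + z • B)))‖ ≤ Real.exp (c * z.im) := by
  refine norm_exp_le_of_reApplyInnerSelf_le _ _ fun x => ?_
  have hre : (-(I • (A + z • B))).reApplyInnerSelf x = z.im * B.reApplyInnerSelf x := by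
    rw [reApplyInnerSelf_apply, _root_.neg_apply, _root_.smul_apply, _root_.add_apply,
      _root_.smul_apply, inner_neg_left, inner_smul_left, inner_add_left, inner_smul_left,
      ← hA.coe_reApplyInnerSelf_apply, ← hB.coe_reApplyInnerSelf_apply]
    simp [Complex.mul_re]
  rw [hre, mul_comm c, mul_assoc]
  exact mul_le_mul_of_nonpos_left (hBc x) hz

end Dissipative

theorem exists_pos_mul_norm_sq_le_reApplyInnerSelf {𝕜 E : Type*} [RCLike 𝕜]
    [NormedAddCommGroup E] [InnerProductSpace 𝕜 E] [FiniteDimensional 𝕜 E] (T : E →L[𝕜] E)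
    (hT : ∀ x, x ≠ 0 → 0 < T.reApplyInnerSelf x) :
    ∃ c > 0, ∀ x, c * ‖x‖ ^ 2 ≤ T.reApplyInnerSelf x := by
  rcases subsingleton_or_nontrivial E with hE | hE
  · exact ⟨1, one_pos, fun x => by simp [Subsingleton.elim x 0, T.reApplyInnerSelf_apply]⟩
  have := FiniteDimensional.proper 𝕜 E
  obtain ⟨x₀, hx₀, hmin⟩ := (isCompact_sphere (0 : E) 1).exists_isMinOn
    (Set.nonempty_coe_sort.1 (NormedSpace.sphere_nonempty_rclike 𝕜 zero_le_one))
    T.reApplyInnerSelf_continuous.continuousOn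
  refine ⟨_, hT x₀ (ne_zero_of_mem_unit_sphere ⟨x₀, hx₀⟩), fun x => ?_⟩
  rcases eq_or_ne x 0 with rfl | hx
  · simp [T.reApplyInnerSelf_apply]
  have hxn : 0 < ‖x‖ := norm_pos_iff.2 hx
  have := hmin (a := (‖x‖⁻¹ : 𝕜) • x) (by simpa using norm_smul_inv_norm hx)
  rw [Set.mem_ofPred_eq, T.reApplyInnerSelf_smul, norm_inv, RCLike.norm_ofReal, abs_norm] at this
  rw [← le_div_iff₀ (by positivity)]
  calc _ ≤ _ := this
    _ = _ := by field_simp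

namespace Matrix

variable {n : Type*} [Fintype n] [DecidableEq n]

theorem toEuclideanCLM_exp (A : Matrix n n ℂ) :
    toEuclideanCLM (𝕜 := ℂ) (NormedSpace.exp A) = NormedSpace.exp (toEuclideanCLM (𝕜 := ℂ) A) :=
  let _ : NormedAlgebra ℚ (Matrix n n ℂ) := NormedAlgebra.restrictScalars ℚ ℂ _
  NormedSpace.map_exp _ (AddMonoidHomClass.isometry_of_norm _ fun _ => rfl).continuous A

theorem IsHermitian.isSymmetric_toEuclideanCLM {𝕜 : Type*} [RCLike 𝕜] {A : Matrix n n 𝕜}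
    (hA : A.IsHermitian) : (toEuclideanCLM (𝕜 := 𝕜) A : EuclideanSpace 𝕜 n →ₗ[𝕜] _).IsSymmetric :=
  isSymmetric_toEuclideanLin_iff.2 hA

theorem PosDef.reApplyInnerSelf_toEuclideanCLM_pos {𝕜 : Type*} [RCLike 𝕜] {A : Matrix n n 𝕜}
    (hA : A.PosDef) {x : EuclideanSpace 𝕜 n} (hx : x ≠ 0) :
    0 < (toEuclideanCLM (𝕜 := 𝕜) A).reApplyInnerSelf x := by
  rw [ContinuousLinearMap.reApplyInnerSelf_apply, inner_re_symm,
    EuclideanSpace.inner_eq_star_dotProduct, ofLp_toEuclideanCLM, dotProduct_comm]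
  exact hA.re_dotProduct_pos (by simpa using hx)

end Matrix

section LowerHalfPlane

open Complex Filter Topology

variable {E : Type*} [NormedAddCommGroup E] [NormedSpace ℂ E] {g : ℂ → E} {c C R : ℝ}

theorem norm_integral_lower_edge_le
    (hg : ∀ z : ℂ, z.im ≤ 0 → ‖z‖ * ‖g z‖ ≤ C * Real.exp (c * z.im)) (hR : 0 < R) :
    ‖∫ x : ℝ in -R..R, g (x + (-R : ℝ) * I)‖ ≤ 2 * C * Real.exp (-(c * R)) := by
  have hpt (x : ℝ) : ‖g (x + (-R : ℝ) * I)‖ ≤ C * Real.exp (-(c * R)) / R := by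
    have him : (x + (-R : ℝ) * I).im = -R := by simp
    have hle : R ≤ ‖(x : ℂ) + (-R : ℝ) * I‖ := by
      simpa [him, abs_of_pos hR] using abs_im_le_norm ((x : ℂ) + (-R : ℝ) * I)
    rw [le_div_iff₀ hR, mul_comm]
    calc R * ‖g (x + (-R : ℝ) * I)‖ ≤ ‖(x : ℂ) + (-R : ℝ) * I‖ * ‖g (x + (-R : ℝ) * I)‖ := by
          gcongr
      _ ≤ C * Real.exp (-(c * R)) := by
          have := hg (x + (-R : ℝ) * I) (by rw [him]; linarith)
          rwa [him, mul_neg] at this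
  calc _ ≤ C * Real.exp (-(c * R)) / R * |R - -R| :=
        intervalIntegral.norm_integral_le_of_norm_le_const fun x _ => hpt x
    _ = 2 * C * Real.exp (-(c * R)) := by
        rw [sub_neg_eq_add, abs_of_pos (by linarith)]; field_simp; ring

theorem norm_integral_vertical_edge_le
    (hg : ∀ z : ℂ, z.im ≤ 0 → ‖z‖ * ‖g z‖ ≤ C * Real.exp (c * z.im)) (hc : 0 < c) (hR : 0 < R)
    {a : ℝ} (ha : R ≤ |a|) :
    ‖∫ y : ℝ in -R..0, g (a + y * I)‖ ≤ C / (c * R) := by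
  have hC : 0 ≤ C := by simpa using hg 0 le_rfl
  have hpt : ∀ y ∈ Set.Ioc (-R) 0, ‖g (a + y * I)‖ ≤ C / R * Real.exp (c * y) := by
    intro y hy
    have hle : R ≤ ‖(a : ℂ) + y * I‖ := ha.trans (by simpa using abs_re_le_norm ((a : ℂ) + y * I))
    rw [div_mul_eq_mul_div, le_div_iff₀ hR, mul_comm]
    calc R * ‖g (a + y * I)‖ ≤ ‖(a : ℂ) + y * I‖ * ‖g (a + y * I)‖ := by gcongr
      _ ≤ C * Real.exp (c * y) := by simpa using hg (a + y * I) (by simpa using hy.2)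
  have hexp : ∫ y in -R..0, Real.exp (c * y) = (1 - Real.exp (-(c * R))) / c := by
    rw [intervalIntegral.integral_comp_mul_left (fun y => Real.exp y) hc.ne', integral_exp]
    simp [div_eq_inv_mul]
  calc _ ≤ ∫ y in -R..0, C / R * Real.exp (c * y) :=
        intervalIntegral.norm_integral_le_of_norm_le (by linarith)
          (Eventually.of_forall hpt) (Continuous.intervalIntegrable (by fun_prop) _ _)
    _ = C / R * ((1 - Real.exp (-(c * R))) / c) := by
        rw [intervalIntegral.integral_const_mul, hexp]
    _ ≤ C / R * (1 / c) := by gcongr; linarith [Real.exp_pos (-(c * R))]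
    _ = C / (c * R) := by field_simp

theorem norm_intervalIntegral_le_of_lowerHalfPlane [CompleteSpace E]
    (hd : DifferentiableOn ℂ g {z | z.im ≤ 0})
    (hg : ∀ z : ℂ, z.im ≤ 0 → ‖z‖ * ‖g z‖ ≤ C * Real.exp (c * z.im)) (hc : 0 < c) (hR : 0 < R) :
    ‖∫ x : ℝ in -R..R, g x‖ ≤ 2 * C * (Real.exp (-(c * R)) + (c * R)⁻¹) := by
  have hrect := integral_boundary_rect_eq_zero_of_differentiableOn g ⟨-R, -R⟩ ⟨R, 0⟩
    (hd.mono fun z hz => by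
      have := (mem_reProdIm.1 hz).2
      rw [Set.uIcc_of_le (neg_nonpos.2 hR.le)] at this
      exact this.2)
  simp only [ofReal_zero, zero_mul, add_zero] at hrect
  have hsplit : ∫ x : ℝ in -R..R, g x = (∫ x : ℝ in -R..R, g (x + (-R : ℝ) * I))
      + I • (∫ y : ℝ in -R..0, g (R + y * I)) - I • (∫ y : ℝ in -R..0, g ((-R : ℝ) + y * I)) := by
    rw [← sub_eq_zero, ← neg_eq_zero, ← hrect]; abel
  have hbottom := norm_integral_lower_edge_le hg hR
  have hright := norm_integral_vertical_edge_le hg hc hR (a := R) (le_abs_self R)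
  have hleft := norm_integral_vertical_edge_le hg hc hR (a := -R) (by simp [le_abs_self])
  rw [hsplit]
  calc _ ≤ ‖∫ x : ℝ in -R..R, g (x + (-R : ℝ) * I)‖ + ‖∫ y : ℝ in -R..0, g (R + y * I)‖
        + ‖∫ y : ℝ in -R..0, g ((-R : ℝ) + y * I)‖ := by
        refine (norm_sub_le _ _).trans ?_
        rw [norm_smul I, norm_I, one_mul]
        gcongr
        exact (norm_add_le _ _).trans_eq (by rw [norm_smul, norm_I, one_mul])
    _ ≤ 2 * C * Real.exp (-(c * R)) + C / (c * R) + C / (c * R) := by gcongr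
    _ = 2 * C * (Real.exp (-(c * R)) + (c * R)⁻¹) := by ring

theorem tendsto_intervalIntegral_of_lowerHalfPlane [CompleteSpace E]
    (hd : DifferentiableOn ℂ g {z | z.im ≤ 0})
    (hg : ∀ z : ℂ, z.im ≤ 0 → ‖z‖ * ‖g z‖ ≤ C * Real.exp (c * z.im)) (hc : 0 < c) :
    Tendsto (fun R : ℝ => ∫ x : ℝ in -R..R, g x) atTop (𝓝 0) := by
  have hcR : Tendsto (fun R : ℝ => c * R) atTop atTop := tendsto_id.const_mul_atTop hc
  have hbound : Tendsto (fun R : ℝ => 2 * C * (Real.exp (-(c * R)) + (c * R)⁻¹)) atTop (𝓝 0) := by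
    simpa using ((Real.tendsto_exp_neg_atTop_nhds_zero.comp hcR).add
      (tendsto_inv_atTop_zero.comp hcR)).const_mul (2 * C)
  refine squeeze_zero_norm' ?_ hbound
  filter_upwards [eventually_gt_atTop 0] with R hR
  exact norm_intervalIntegral_le_of_lowerHalfPlane hd hg hc hR

end LowerHalfPlane

open Complex in
theorem norm_le_norm_one_add_I_mul {z : ℂ} (hz : z.im ≤ 0) : ‖z‖ ≤ ‖1 + I * z‖ := by
  have h : 1 + I * z = I * (z - I) := by rw [mul_sub, I_mul_I]; ring
  rw [h, norm_mul, norm_I, one_mul, ← sq_le_sq₀ (norm_nonneg _) (norm_nonneg _),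
    Complex.sq_norm, Complex.sq_norm, normSq_apply, normSq_apply]
  simp only [sub_re, sub_im, I_re, I_im, sub_zero]
  nlinarith

open Complex Filter in
/-- For Hermitian `H`, `L` with `L` positive definite, the Cauchy principal value
`lim_{R→∞} ∫_{-R}^R (1/(1+ik)) e^{-i(H+kL)} dk` is the zero matrix. -/
theorem principal_value_vanishes (n : ℕ) (H L : Matrix (Fin n) (Fin n) ℂ)
    (hH : H.IsHermitian) (hL : L.PosDef) :
    Filter.Tendsto
      (fun R : ℝ => ∫ k in Set.Ioc (-R) R,
        (1 + Complex.I * k)⁻¹ • NormedSpace.exp (-(Complex.I • (H + (k : ℂ) • L))))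
      Filter.atTop (nhds 0) := by
  obtain ⟨c, hc, hcL⟩ := exists_pos_mul_norm_sq_le_reApplyInnerSelf _
    fun x hx => hL.reApplyInnerSelf_toEuclideanCLM_pos hx
  have hexp (z : ℂ) (hz : z.im ≤ 0) :
      ‖NormedSpace.exp (-(I • (H + z • L)))‖ ≤ Real.exp (c * z.im) := by
    rw [cstar_norm_def, toEuclideanCLM_exp]
    simpa using norm_exp_neg_I_smul_add_smul_le hH.isSymmetric_toEuclideanCLM
      hL.1.isSymmetric_toEuclideanCLM hcL hz
  have hne (z : ℂ) (hz : z.im ≤ 0) : 1 + I * z ≠ 0 := fun h => by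
    have := congrArg re h
    simp only [add_re, one_re, mul_re, I_re, I_im, zero_mul, one_mul, zero_sub, zero_re] at this
    linarith
  have hd : DifferentiableOn ℂ (fun z : ℂ => (1 + I * z)⁻¹ • NormedSpace.exp (-(I • (H + z • L))))
      {z | z.im ≤ 0} := fun z hz =>
    (((differentiableAt_const _).add (differentiableAt_id.const_mul I)).inv (hne z hz)).smul
      ((NormedSpace.exp_analytic _).differentiableAt.comp z (by fun_prop)) |>.differentiableWithinAt
  have hg (z : ℂ) (hz : z.im ≤ 0) :
      ‖z‖ * ‖(1 + I * z)⁻¹ • NormedSpace.exp (-(I • (H + z • L)))‖ ≤ 1 * Real.exp (c * z.im) := by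
    rw [norm_smul, norm_inv, ← mul_assoc]
    exact mul_le_mul (mul_inv_le_one_of_le₀ (norm_le_norm_one_add_I_mul hz) (norm_nonneg _))
      (hexp z hz) (norm_nonneg _) zero_le_one
  refine (tendsto_intervalIntegral_of_lowerHalfPlane hd hg hc).congr' ?_
  filter_upwards [eventually_ge_atTop 0] with R hR
  exact intervalIntegral.integral_of_le (by linarith)
end

section
/- Let H, L be Hermitian matrices with L ⪰ λ₀ I for λ₀ > 0, and let ω be a complex number with nonnegative real part. Then ‖e^{-iH - ωL}‖ ≤ e^{-λ₀ Re(ω)}, where ‖·‖ is the operator norm. -/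
/-!
The generator `A = -iH - ωL` is dissipative: `⟪x, H x⟫` and `⟪x, L x⟫` are real and
`⟪x, L x⟫ ≥ λ₀ ‖x‖²`, so `Re ⟪x, A x⟫ ≤ -λ₀ Re ω ‖x‖²`. Along `u t = e^{tA} x` this gives
`d/dt ‖u t‖² = 2 Re ⟪u t, A (u t)⟫ ≤ -2 λ₀ Re ω ‖u t‖²`, so `e^{2 λ₀ Re ω t} ‖u t‖²` is
nonincreasing; comparing `t = 0` with `t = 1` bounds `‖e^A x‖`. Matrices with the `ℓ²` operator
norm are transported to operators on Euclidean space by the isometric star-algebra isomorphism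
`Matrix.toEuclideanCLM`, which commutes with `exp`.
-/

open NormedSpace ContinuousLinearMap
open scoped ComplexOrder InnerProductSpace Matrix.Norms.L2Operator

section HilbertSpace

variable {E : Type*} [NormedAddCommGroup E] [InnerProductSpace ℂ E]

theorem mul_norm_sq_le_re_inner_apply_self {T : E →L[ℂ] E} {r : ℝ}
    (hT : (T - r • 1).IsPositive) (x : E) : r * ‖x‖ ^ 2 ≤ (⟪x, T x⟫_ℂ).re := by
  have := hT.re_inner_nonneg_right x
  rw [sub_apply, smul_apply, one_apply_eq_self, inner_sub_right,
    RCLike.real_smul_eq_coe_smul (K := ℂ), inner_smul_right, inner_self_eq_norm_sq_to_K] at this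
  simpa [sub_nonneg, ← Complex.ofReal_pow] using this

variable [CompleteSpace E]

theorem re_inner_smul_apply_self {T : E →L[ℂ] E} (hT : IsSelfAdjoint T) (z : ℂ) (x : E) :
    (⟪x, (z • T) x⟫_ℂ).re = z.re * (⟪x, T x⟫_ℂ).re := by
  have him : (⟪x, T x⟫_ℂ).im = 0 := hT.isSymmetric.im_inner_self_apply x
  rw [smul_apply, inner_smul_right, Complex.mul_re, him, mul_zero, sub_zero]

theorem re_inner_neg_I_smul_sub_smul_apply_self_le {H L : E →L[ℂ] E} (hH : IsSelfAdjoint H)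
    {r : ℝ} (hL : (L - r • 1).IsPositive) {ω : ℂ} (hω : 0 ≤ ω.re) (x : E) :
    (⟪x, (-(Complex.I • H) - ω • L) x⟫_ℂ).re ≤ -(r * ω.re) * ‖x‖ ^ 2 := by
  have hL' : IsSelfAdjoint L := by
    simpa using hL.isSelfAdjoint.add ((IsSelfAdjoint.all r).smul (IsSelfAdjoint.one (E →L[ℂ] E)))
  rw [sub_apply, neg_apply, inner_sub_right, inner_neg_right, Complex.sub_re, Complex.neg_re,
    re_inner_smul_apply_self hH, re_inner_smul_apply_self hL', Complex.I_re, zero_mul, neg_zero,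
    zero_sub]
  nlinarith [mul_norm_sq_le_re_inner_apply_self hL x]

theorem hasDerivAt_exp_smul_apply (A : E →L[ℂ] E) (x : E) (t : ℝ) :
    HasDerivAt (fun s : ℝ => exp (s • A) x) (A (exp (t • A) x)) t :=
  ((apply ℂ E x).restrictScalars ℝ).hasFDerivAt.comp_hasDerivAt t
    (hasDerivAt_exp_smul_const' A t)

theorem hasDerivAt_norm_sq_exp_smul_apply (A : E →L[ℂ] E) (x : E) (t : ℝ) :
    HasDerivAt (fun s : ℝ => ‖exp (s • A) x‖ ^ 2)
      (2 * (⟪exp (t • A) x, A (exp (t • A) x)⟫_ℂ).re) t := by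
  let _ := InnerProductSpace.rclikeToReal ℂ E
  simpa only [real_inner_eq_re_inner ℂ, RCLike.re_to_complex] using
    (hasDerivAt_exp_smul_apply A x t).norm_sq

theorem antitone_exp_mul_norm_sq_exp_smul_apply {A : E →L[ℂ] E} {c : ℝ}
    (hA : ∀ y, (⟪y, A y⟫_ℂ).re ≤ -c * ‖y‖ ^ 2) (x : E) :
    Antitone fun t : ℝ => Real.exp (2 * c * t) * ‖exp (t • A) x‖ ^ 2 := by
  set u := fun t : ℝ => exp (t • A) x
  refine antitone_of_hasDerivAt_nonpos
    (f' := fun t => 2 * Real.exp (2 * c * t) * (c * ‖u t‖ ^ 2 + (⟪u t, A (u t)⟫_ℂ).re))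
    (fun t => ?_) fun t => ?_
  · refine ((((hasDerivAt_id' t).const_mul (2 * c)).exp).mul
      (hasDerivAt_norm_sq_exp_smul_apply A x t)).congr_deriv ?_
    ring
  · show _ ≤ 0
    nlinarith [hA (u t), Real.exp_pos (2 * c * t)]

theorem norm_exp_le_of_re_inner_le {A : E →L[ℂ] E} {c : ℝ}
    (hA : ∀ y, (⟪y, A y⟫_ℂ).re ≤ -c * ‖y‖ ^ 2) : ‖exp A‖ ≤ Real.exp (-c) := by
  refine (exp A).opNorm_le_bound (Real.exp_nonneg _) fun x => ?_
  have h := antitone_exp_mul_norm_sq_exp_smul_apply hA x zero_le_one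
  simp only [mul_one, mul_zero, Real.exp_zero, one_mul, one_smul, zero_smul, exp_zero,
    one_apply_eq_self] at h
  have hexp : Real.exp (-c) ^ 2 * Real.exp (2 * c) = 1 := by
    rw [← Real.exp_nat_mul, ← Real.exp_add]
    norm_num
  refine (pow_le_pow_iff_left₀ (norm_nonneg _) (by positivity) two_ne_zero).mp ?_
  calc ‖exp A x‖ ^ 2 = Real.exp (-c) ^ 2 * (Real.exp (2 * c) * ‖exp A x‖ ^ 2) := by
        rw [← mul_assoc, hexp, one_mul]
    _ ≤ Real.exp (-c) ^ 2 * ‖x‖ ^ 2 := by gcongr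
    _ = (Real.exp (-c) * ‖x‖) ^ 2 := by ring

theorem norm_exp_neg_I_smul_sub_smul_le {H L : E →L[ℂ] E} (hH : IsSelfAdjoint H)
    {r : ℝ} (hL : (L - r • 1).IsPositive) {ω : ℂ} (hω : 0 ≤ ω.re) :
    ‖exp (-(Complex.I • H) - ω • L)‖ ≤ Real.exp (-(r * ω.re)) :=
  norm_exp_le_of_re_inner_le (re_inner_neg_I_smul_sub_smul_apply_self_le hH hL hω)

end HilbertSpace

open Matrix

section EuclideanMatrix

variable {𝕜 m : Type*} [RCLike 𝕜] [Fintype m] [DecidableEq m]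

theorem Matrix.toEuclideanCLM_exp_s6 (A : Matrix m m 𝕜) :
    toEuclideanCLM (n := m) (𝕜 := 𝕜) (exp A) = exp (toEuclideanCLM (n := m) (𝕜 := 𝕜) A) :=
  map_exp_of_mem_ball (𝕂 := 𝕜) (toEuclideanCLM (n := m) (𝕜 := 𝕜))
    (LinearMap.continuous_of_finiteDimensional
      (toEuclideanCLM (n := m) (𝕜 := 𝕜)).toAlgEquiv.toLinearMap)
    A (by simp [expSeries_radius_eq_top])

theorem Matrix.PosSemidef.isPositive_toEuclideanCLM {A : Matrix m m 𝕜} (hA : A.PosSemidef) :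
    (toEuclideanCLM (n := m) (𝕜 := 𝕜) A).IsPositive :=
  (LinearMap.isPositive_toContinuousLinearMap_iff _).mpr (isPositive_toEuclideanLin_iff.mpr hA)

end EuclideanMatrix

theorem exp_contraction_bound_general (n : ℕ) (H L : Matrix (Fin n) (Fin n) ℂ)
    (hH : H.IsHermitian) (lam0 : ℝ)
    (hLlow : (L - lam0 • (1 : Matrix (Fin n) (Fin n) ℂ)).PosSemidef)
    (ω : ℂ) (hω : 0 ≤ ω.re) :
    ‖NormedSpace.exp (-(Complex.I • H) - ω • L)‖ ≤ Real.exp (-(lam0 * ω.re)) := by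
  have hH' : IsSelfAdjoint (toEuclideanCLM (𝕜 := ℂ) H) :=
    (isHermitian_iff_isSelfAdjoint.mp hH).map _
  have hL' : (toEuclideanCLM (𝕜 := ℂ) L - lam0 • 1).IsPositive := by
    convert hLlow.isPositive_toEuclideanCLM using 1
    rw [map_sub, ← Complex.coe_smul, map_smul, map_one]
    ext x : 1
    simp
  rw [← l2_opNorm_toEuclideanCLM, toEuclideanCLM_exp_s6, map_sub, map_neg, map_smul, map_smul]
  exact norm_exp_neg_I_smul_sub_smul_le hH' hL' hω

/-- If `H`, `L` are Hermitian with `L ⪰ λ₀ I`, `λ₀ > 0`, and `Re ω ≥ 0`, then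
`‖e^{-iH - ωL}‖ ≤ e^{-λ₀ Re ω}` in the `ℓ²` operator norm. -/
theorem exp_contraction_bound (n : ℕ) (H L : Matrix (Fin n) (Fin n) ℂ)
    (hH : H.IsHermitian) (hL : L.IsHermitian) (lam0 : ℝ) (hlam : 0 < lam0)
    (hLlow : (L - lam0 • (1 : Matrix (Fin n) (Fin n) ℂ)).PosSemidef)
    (ω : ℂ) (hω : 0 ≤ ω.re) :
    ‖NormedSpace.exp (-(Complex.I • H) - ω • L)‖ ≤ Real.exp (-(lam0 * ω.re)) :=
  exp_contraction_bound_general n H L hH lam0 hLlow ω hω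
end

section
/- Let A be an n×n complex matrix written as A = L + iH with L = (A + A†)/2 Hermitian positive semidefinite and H = (A − A†)/(2i) Hermitian. Then for all t ≥ 0, e^{-At} = ∫_ℝ (1/(π(1+k²))) e^{-i(H + kL)t} dk. -/
/-!
For `z ∈ ℂ` put `Φ z = exp (-(i t) • (H + z • L))`. This is an entire function of `z`, and for
`im z ≤ 0` its exponent `M` satisfies `-(M + Mᴴ) = -2 t (im z) • L ≥ 0`, so `‖Φ z‖ ≤ 1` there,
because `u s = exp (s • M) x` has `d/ds ‖u s‖² = 2 re ⟪u s, M (u s)⟫ ≤ 0`. For a function that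
is entire and bounded on the closed lower half-plane, integrating against the Cauchy kernel
`1 / (π (1 + k²)) = 1 / (π (k - i) (k + i))` returns the value at `-i`: after subtracting `Φ (-i)`
the integrand extends holomorphically to `im z ≤ 0` with `O(‖z‖⁻²)` decay, so its integral over
`ℝ` vanishes by closing the contour with rectangles `[-R, R] × [-R, 0]`. Finally
`Φ (-i) = exp (-t (L + i H)) = exp (-t A)`.
-/

open Matrix
open scoped ComplexOrder

open MeasureTheory Real
open scoped Matrix.Norms.L2Operator

open Complex Filter Topology
open scoped InnerProductSpace

section LowerHalfPlane

variable {E : Type*} [NormedAddCommGroup E] [NormedSpace ℂ E]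

theorem norm_intervalIntegral_le_of_differentiableAt_of_im_nonpos (h : ℂ → E)
    (hd : ∀ z : ℂ, z.im ≤ 0 → DifferentiableAt ℂ h z) {R C : ℝ} (hR : 0 ≤ R)
    (hb : ∀ z : ℂ, z.im ≤ 0 → R ≤ ‖z‖ → ‖h z‖ ≤ C) :
    ‖∫ x in (-R)..R, h x‖ ≤ 4 * R * C := by
  have hrect := integral_boundary_rect_eq_zero_of_differentiableOn h (-R) (R - R * I)
    fun z hz => (hd z ?_).differentiableWithinAt
  swap
  · have hz := (mem_reProdIm.1 hz).2
    simp only [neg_im, ofReal_im, neg_zero, sub_im, mul_im, ofReal_re, I_im, mul_one, I_re,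
      mul_zero, add_zero, zero_sub, Set.uIcc_of_ge (neg_nonpos.2 hR)] at hz
    exact hz.2
  have hbottom : ‖∫ x in (-R)..R, h (x + (-R : ℝ) * I)‖ ≤ C * (2 * R) := by
    refine (intervalIntegral.norm_integral_le_of_norm_le_const fun x _ => hb _ ?_ ?_).trans_eq ?_
    · simpa using hR
    · simpa [abs_of_nonneg hR] using abs_im_le_norm (x + (-R : ℝ) * I)
    · rw [sub_neg_eq_add, abs_of_nonneg (by linarith), two_mul]
  have hside (a : ℝ) (ha : |a| = R) : ‖∫ y in (0 : ℝ)..(-R), h (a + y * I)‖ ≤ C * R := by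
    refine (intervalIntegral.norm_integral_le_of_norm_le_const fun y hy => hb _ ?_ ?_).trans_eq ?_
    · simpa using (Set.uIoc_of_ge (neg_nonpos.2 hR) ▸ hy).2
    · simpa [ha] using abs_re_le_norm (a + y * I)
    · rw [sub_zero, abs_neg, abs_of_nonneg hR]
  have hreal : ∫ x in (-R)..R, h x = (∫ x in (-R)..R, h (x + (-R : ℝ) * I))
      - I • (∫ y in (0 : ℝ)..(-R), h (R + y * I))
      + I • ∫ y in (0 : ℝ)..(-R), h ((-R : ℝ) + y * I) := by
    simp only [neg_re, ofReal_re, sub_re, mul_re, I_re, mul_zero, ofReal_im, I_im, mul_one,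
      sub_self, sub_zero, neg_im, neg_zero, add_zero, sub_im, mul_im, zero_sub, ofReal_zero,
      zero_mul] at hrect
    rw [← sub_eq_zero, ← hrect]
    abel
  rw [hreal]
  calc _ ≤ ‖∫ x in (-R)..R, h (x + (-R : ℝ) * I)‖ + ‖I • ∫ y in (0 : ℝ)..(-R), h (R + y * I)‖
        + ‖I • ∫ y in (0 : ℝ)..(-R), h ((-R : ℝ) + y * I)‖ :=
      (norm_add_le _ _).trans (by gcongr; exact norm_sub_le _ _)
    _ ≤ C * (2 * R) + C * R + C * R := by
      simp only [norm_smul, norm_I, one_mul]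
      exact add_le_add_three hbottom (hside R (abs_of_nonneg hR))
        (hside (-R) (by rw [abs_neg, abs_of_nonneg hR]))
    _ = 4 * R * C := by ring

theorem integral_eq_zero_of_differentiableAt_of_im_nonpos (h : ℂ → E)
    (hd : ∀ z : ℂ, z.im ≤ 0 → DifferentiableAt ℂ h z) (hi : Integrable fun x : ℝ => h x)
    {R₀ M : ℝ} (hM : 0 ≤ M) (hb : ∀ z : ℂ, z.im ≤ 0 → R₀ ≤ ‖z‖ → ‖h z‖ ≤ M / ‖z‖ ^ 2) :
    ∫ x : ℝ, h x = 0 := by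
  have hdecay : Tendsto (fun R : ℝ => 4 * M / R) atTop (𝓝 0) :=
    tendsto_const_nhds.div_atTop tendsto_id
  refine tendsto_nhds_unique
    (intervalIntegral_tendsto_integral hi tendsto_neg_atTop_atBot tendsto_id) ?_
  refine squeeze_zero_norm' ?_ hdecay
  filter_upwards [eventually_ge_atTop (max R₀ 1)] with R hR
  have hR₀ : R₀ ≤ R := (le_max_left _ _).trans hR
  have hRpos : 0 < R := zero_lt_one.trans_le ((le_max_right _ _).trans hR)
  calc ‖∫ x in (-R)..R, h x‖ ≤ 4 * R * (M / R ^ 2) :=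
        norm_intervalIntegral_le_of_differentiableAt_of_im_nonpos h hd hRpos.le
          fun z hz hzR => (hb z hz (hR₀.trans hzR)).trans (by gcongr)
    _ = 4 * M / R := by field_simp

theorem integrable_inv_pi_mul_one_add_sq : Integrable fun x : ℝ => (π * (1 + x ^ 2))⁻¹ := by
  simpa only [mul_inv] using integrable_inv_one_add_sq.const_mul π⁻¹

theorem integral_inv_pi_mul_one_add_sq : ∫ x : ℝ, (π * (1 + x ^ 2))⁻¹ = 1 := by
  simp only [mul_inv, integral_const_mul, integral_univ_inv_one_add_sq, inv_mul_cancel₀ pi_ne_zero]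

noncomputable def poissonRemainder (Φ : ℂ → E) (z : ℂ) : E :=
  ((π : ℂ) * (z - I))⁻¹ • dslope Φ (-I) z

theorem inv_pi_mul_one_add_sq_smul_eq_add_poissonRemainder (Φ : ℂ → E) (x : ℝ) :
    (π * (1 + x ^ 2))⁻¹ • Φ x = (π * (1 + x ^ 2))⁻¹ • Φ (-I) + poissonRemainder Φ x := by
  have hx : (x : ℂ) ≠ -I := fun hx => by simpa using congrArg im hx
  have hkernel : ((π : ℂ) * (x - I))⁻¹ * (x + I)⁻¹ = ((π * (1 + x ^ 2))⁻¹ : ℝ) := by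
    rw [← mul_inv]
    push_cast
    congr 1
    linear_combination -(π : ℂ) * I_sq
  rw [poissonRemainder, dslope_of_ne _ hx, slope_def_module, sub_neg_eq_add, smul_smul, hkernel,
    Complex.coe_smul, smul_sub]
  abel

theorem differentiableAt_poissonRemainder [CompleteSpace E] {Φ : ℂ → E}
    (hΦ : Differentiable ℂ Φ) {z : ℂ} (hz : z.im ≤ 0) :
    DifferentiableAt ℂ (poissonRemainder Φ) z := by
  have hdslope : Differentiable ℂ (dslope Φ (-I)) := fun w =>
    ((Complex.differentiableOn_dslope univ_mem).2 hΦ.differentiableOn w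
      (Set.mem_univ w)).differentiableAt univ_mem
  have hzI : (π : ℂ) * (z - I) ≠ 0 := mul_ne_zero (ofReal_ne_zero.2 pi_ne_zero)
    (sub_ne_zero.2 fun h => by norm_num [h] at hz)
  exact (((differentiableAt_id.sub_const I).const_mul _).inv hzI).smul (hdslope z)

theorem norm_poissonRemainder_le {Φ : ℂ → E} {C : ℝ} (hb : ∀ z : ℂ, z.im ≤ 0 → ‖Φ z‖ ≤ C)
    {z : ℂ} (hz : z.im ≤ 0) (hz2 : 2 ≤ ‖z‖) : ‖poissonRemainder Φ z‖ ≤ 8 * C / ‖z‖ ^ 2 := by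
  have hzI : z ≠ -I := by rintro rfl; norm_num at hz2
  have hpos : 0 < ‖z‖ / 2 := by linarith
  have hΦ : ‖Φ z - Φ (-I)‖ ≤ 2 * C :=
    (norm_sub_le _ _).trans (by linarith [hb z hz, hb (-I) (by simp)])
  have hsub : ‖z‖ / 2 ≤ ‖(π : ℂ) * (z - I)‖ := by
    have := norm_sub_norm_le z I
    rw [norm_I] at this
    rw [norm_mul, norm_real, norm_of_nonneg pi_pos.le]
    nlinarith [pi_gt_three, norm_nonneg (z - I)]
  have hadd : ‖z‖ / 2 ≤ ‖z + I‖ := by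
    have := norm_sub_norm_le z (-I)
    rw [norm_neg, norm_I, sub_neg_eq_add] at this
    linarith
  rw [poissonRemainder, dslope_of_ne _ hzI, slope_def_module, sub_neg_eq_add, norm_smul,
    norm_smul, norm_inv, norm_inv]
  calc _ ≤ (‖z‖ / 2)⁻¹ * ((‖z‖ / 2)⁻¹ * (2 * C)) := by gcongr
    _ = 8 * C / ‖z‖ ^ 2 := by field_simp; ring

theorem integral_inv_pi_mul_one_add_sq_smul_eq_apply_neg_I [CompleteSpace E] {Φ : ℂ → E}
    (hΦ : Differentiable ℂ Φ) {C : ℝ} (hb : ∀ z : ℂ, z.im ≤ 0 → ‖Φ z‖ ≤ C) :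
    ∫ x : ℝ, (π * (1 + x ^ 2))⁻¹ • Φ x = Φ (-I) := by
  have hC : 0 ≤ C := (norm_nonneg _).trans (hb (-I) (by simp))
  have hint : Integrable fun x : ℝ => (π * (1 + x ^ 2))⁻¹ • Φ x := by
    refine (integrable_inv_pi_mul_one_add_sq.mul_const C).mono'
      (by have := hΦ.continuous; fun_prop) (ae_of_all _ fun x => ?_)
    rw [norm_smul, norm_of_nonneg (by positivity)]
    exact mul_le_mul_of_nonneg_left (hb x (by simp)) (by positivity)
  have hint_const := integrable_inv_pi_mul_one_add_sq.smul_const (Φ (-I))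
  have hint_rem : Integrable fun x : ℝ => poissonRemainder Φ x := by
    refine (hint.sub hint_const).congr (ae_of_all _ fun x => ?_)
    rw [Pi.sub_apply, inv_pi_mul_one_add_sq_smul_eq_add_poissonRemainder Φ, add_sub_cancel_left]
  have hrem : ∫ x : ℝ, poissonRemainder Φ x = 0 :=
    integral_eq_zero_of_differentiableAt_of_im_nonpos _
      (fun z hz => differentiableAt_poissonRemainder hΦ hz) hint_rem (by positivity)
      fun z hz hz2 => norm_poissonRemainder_le hb hz hz2
  simp_rw [inv_pi_mul_one_add_sq_smul_eq_add_poissonRemainder Φ]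
  rw [integral_add hint_const hint_rem, integral_smul_const, integral_inv_pi_mul_one_add_sq,
    one_smul, hrem, add_zero]

end LowerHalfPlane

theorem ContinuousLinearMap.norm_exp_le_one_of_re_inner_self_nonpos
    {E : Type*} [NormedAddCommGroup E] [InnerProductSpace ℂ E] [CompleteSpace E]
    (T : E →L[ℂ] E) (hT : ∀ x, RCLike.re ⟪x, T x⟫_ℂ ≤ 0) : ‖NormedSpace.exp T‖ ≤ 1 := by
  refine opNorm_le_bound _ zero_le_one fun x => ?_
  rw [one_mul]
  set u : ℝ → E := fun s => NormedSpace.exp (s • T) x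
  have hu (s : ℝ) : HasDerivAt u (T (u s)) s :=
    (((apply ℂ E x).restrictScalars ℝ).hasFDerivAt.comp_hasDerivAt s
      (hasDerivAt_exp_smul_const' T s) :)
  have hnormsq (s : ℝ) : HasDerivAt (fun s => RCLike.re ⟪u s, u s⟫_ℂ)
      (RCLike.re (⟪u s, T (u s)⟫_ℂ + ⟪T (u s), u s⟫_ℂ)) s :=
    Complex.reCLM.hasFDerivAt.comp_hasDerivAt s ((hu s).inner ℂ (hu s))
  have hanti : Antitone fun s => RCLike.re ⟪u s, u s⟫_ℂ := by
    refine antitone_of_hasDerivAt_nonpos hnormsq fun s => ?_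
    rw [map_add, inner_re_symm (T (u s)), Pi.zero_apply]
    linarith [hT (u s)]
  have h01 := hanti zero_le_one
  simp only [inner_self_eq_norm_sq, u, one_smul, zero_smul, NormedSpace.exp_zero,
    one_apply_eq_self] at h01
  exact (sq_le_sq₀ (norm_nonneg _) (norm_nonneg _)).1 h01

theorem Matrix.l2_opNorm_exp_le_one_of_posSemidef {n : Type*} [Fintype n] [DecidableEq n]
    (M : Matrix n n ℂ) (hM : (-(M + Mᴴ)).PosSemidef) : ‖NormedSpace.exp M‖ ≤ 1 := by
  have hcont : Continuous (toEuclideanCLM (n := n) (𝕜 := ℂ)) :=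
    (AddMonoidHomClass.isometry_of_norm _ l2_opNorm_toEuclideanCLM).continuous
  rw [cstar_norm_def, NormedSpace.map_exp_of_mem_ball (𝕂 := ℂ) _ hcont M
    ((NormedSpace.expSeries_radius_eq_top ℂ (Matrix n n ℂ)).symm ▸ edist_lt_top _ _)]
  refine ContinuousLinearMap.norm_exp_le_one_of_re_inner_self_nonpos _ fun x => ?_
  set v := WithLp.ofLp x
  have hadj : RCLike.re (star v ⬝ᵥ Mᴴ *ᵥ v) = RCLike.re (star v ⬝ᵥ M *ᵥ v) := by
    rw [dotProduct_mulVec, ← star_mulVec, star_dotProduct, RCLike.star_def, RCLike.conj_re]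
  have h := hM.re_dotProduct_nonneg v
  rw [EuclideanSpace.inner_eq_star_dotProduct, ofLp_toEuclideanCLM, dotProduct_comm]
  simp only [neg_mulVec, add_mulVec, dotProduct_neg, dotProduct_add, map_neg, map_add, hadj] at h
  linarith

/-- Time-independent LCHS formula: if `A = L + iH` with `L = (A+A†)/2` positive semidefinite
and `H = (A-A†)/(2i)`, then for `t ≥ 0`,
`e^{-At} = ∫_ℝ (1/(π(1+k²))) e^{-i(H+kL)t} dk`. -/
theorem matrix_lchs (n : ℕ) (A L H : Matrix (Fin n) (Fin n) ℂ)
    (hLdef : L = (1 / 2 : ℂ) • (A + Aᴴ))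
    (hHdef : H = (2 * Complex.I)⁻¹ • (A - Aᴴ))
    (hL : L.PosSemidef) (t : ℝ) (ht : 0 ≤ t) :
    NormedSpace.exp (-(t • A))
      = ∫ k : ℝ, (π * (1 + k ^ 2))⁻¹ •
          NormedSpace.exp (-((Complex.I * t) • (H + (k : ℂ) • L))) := by
  have hH : Hᴴ = H := by
    rw [hHdef, conjTranspose_smul, conjTranspose_sub, conjTranspose_conjTranspose, ← neg_sub,
      smul_neg, ← neg_smul]
    congr 1
    simp
  have hdissipative (z : ℂ) : -(-((I * t) • (H + z • L)) + (-((I * t) • (H + z • L)))ᴴ)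
      = (-(2 * t * z.im)) • L := by
    rw [conjTranspose_neg, conjTranspose_smul, conjTranspose_add, conjTranspose_smul, hH,
      hL.isHermitian.eq, ← Complex.coe_smul]
    match_scalars <;> simp only [star_mul', RCLike.star_def, conj_I, conj_ofReal]
    · ring
    · linear_combination (norm := (push_cast; ring)) (I * t) * sub_conj z + 2 * t * z.im * I_sq
  have hΦ : Differentiable ℂ fun z : ℂ => NormedSpace.exp (-((I * t) • (H + z • L))) :=
    fun z => (NormedSpace.exp_analytic (𝕂 := ℂ) _).differentiableAt.comp z (by fun_prop)
  have hA : -(t • A) = -((I * t) • (H + (-I) • L)) := by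
    rw [← Complex.coe_smul, hHdef, hLdef]
    match_scalars <;> simp only [mul_inv, inv_I]
    · linear_combination -(t : ℂ) * I_sq
    · ring
  rw [hA]
  exact (integral_inv_pi_mul_one_add_sq_smul_eq_apply_neg_I hΦ fun z hz =>
    l2_opNorm_exp_le_one_of_posSemidef _
      (hdissipative z ▸ hL.smul (by nlinarith))).symm
end
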